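/- arXiv:2210.15744 — 2 statements merged into one kernel-verified Lean document; each statement's English description precedes it below -/
import Mathlib

section
/- In Ti*(p,γ), for any n and any normalized block vectors x₁*, …, xₙ* of (eⱼ*), ‖∑ⱼ₌₁ⁿ xⱼ*‖ ≤ n^{1/q}/γ. -/
open Finset

noncomputable section

/-- Coordinate restriction `E a` of a finitely supported sequence `a` to the finite set `E`. -/
def restr (E : Finset ℕ) (a : ℕ →₀ ℝ) : ℕ →₀ ℝ := a.filter (· ∈ E)

/-- `E₁ < E₂ < ⋯ < Eₙ`: a family of nonempty finite sets of naturals which are consecutive. -/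
def Consec {n : ℕ} (E : Fin n → Finset ℕ) : Prop :=
  (∀ j, (E j).Nonempty) ∧ ∀ i j : Fin n, i < j → ∀ s ∈ E i, ∀ t ∈ E j, s < t

/-- The set of quantities `γ·(∑ⱼ N(Eⱼ a))/n^{1/q}` over all consecutive families `E₁ < ⋯ < Eₙ`. -/
def tiSet (q γ : ℝ) (N : (ℕ →₀ ℝ) → ℝ) (a : ℕ →₀ ℝ) : Set ℝ :=
  {x | ∃ n : ℕ, 0 < n ∧ ∃ E : Fin n → Finset ℕ, Consec E ∧
    x = γ * (∑ j, N (restr (E j) a)) / (n : ℝ) ^ (1 / q)}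

/-- `N` satisfies the implicit equation defining the norm of the Tirilman space `Ti(p,γ)`:
`‖a‖ = max {‖a‖_∞, γ·sup (∑ⱼ ‖Eⱼ a‖)/n^{1/q}}`. -/
def TiEq (q γ : ℝ) (N : (ℕ →₀ ℝ) → ℝ) : Prop :=
  ∀ a : ℕ →₀ ℝ, N a = max (⨆ i, |a i|) (sSup (tiSet q γ N a))

/-- Finitely many finitely supported vectors have consecutive supports. -/
def ConsecSupp {n : ℕ} (x : Fin n → (ℕ →₀ ℝ)) : Prop :=
  ∀ i j : Fin n, i < j → ∀ s ∈ (x i).support, ∀ t ∈ (x j).support, s < t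

/-- A sequence of finitely supported vectors with consecutive supports. -/
def ConsecSuppSeq (x : ℕ → (ℕ →₀ ℝ)) : Prop :=
  ∀ i j : ℕ, i < j → ∀ s ∈ (x i).support, ∀ t ∈ (x j).support, s < t

/-- The dual norm on `Ti^*(p,γ)` of the functional with coefficient vector `c`:
the supremum of `∑ᵢ cᵢ aᵢ` over the unit ball of the Tirilman norm `N`. -/
def dualN (N : (ℕ →₀ ℝ) → ℝ) (c : ℕ →₀ ℝ) : ℝ :=
  sSup {x | ∃ a : ℕ →₀ ℝ, N a ≤ 1 ∧ x = ∑ i ∈ c.support, c i * a i}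

/-!
Pair `∑ⱼ xⱼ*` with a vector `a` of norm at most one. Writing `Eⱼ` for the support of `xⱼ*`,
the pairing is `∑ⱼ ⟨xⱼ*, Eⱼ a⟩ ≤ ∑ⱼ N(Eⱼ a)`, and as the `Eⱼ` are consecutive the implicit
equation gives `γ n^{-1/q} ∑ⱼ N(Eⱼ a) ≤ N a ≤ 1`.

The work lies in showing that an arbitrary solution `N` of the implicit equation behaves like a
norm: `N 0 = 0`, `N ≤ ℓ₁` (so the supremum in the equation is taken over a bounded set and is not
Lean's junk value `0`) and `N (c • b) ≤ c * N b`. The last two go by induction on the size of the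
support: a consecutive family either splits `b` into pieces of smaller support or has one set
covering all of `b`, and the latter contributes at most `γ N b`, which is harmless as `γ < 1`.
-/

open Filter

variable {q γ : ℝ} {N : (ℕ →₀ ℝ) → ℝ}

lemma restr_apply_of_mem {E : Finset ℕ} {a : ℕ →₀ ℝ} {i : ℕ} (h : i ∈ E) : restr E a i = a i :=
  Finsupp.filter_apply_pos _ _ h

lemma support_restr (E : Finset ℕ) (a : ℕ →₀ ℝ) :
    (restr E a).support = {i ∈ a.support | i ∈ E} :=
  Finsupp.support_filter _ _

lemma restr_smul (E : Finset ℕ) (c : ℝ) (a : ℕ →₀ ℝ) : restr E (c • a) = c • restr E a :=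
  Finsupp.filter_smul

lemma card_support_restr_lt {E : Finset ℕ} {b : ℕ →₀ ℝ} (h : ¬ b.support ⊆ E) :
    #(restr E b).support < #b.support := by
  rw [support_restr]
  refine card_lt_card (filter_ssubset.2 ?_)
  simpa [not_subset] using h

lemma Consec.disjoint {n : ℕ} {E : Fin n → Finset ℕ} (hE : Consec E) {i j : Fin n} (hij : i ≠ j) :
    Disjoint (E i) (E j) := by
  rw [disjoint_left]
  intro s hsi hsj
  rcases hij.lt_or_gt with h | h
  · exact lt_irrefl s (hE.2 i j h s hsi s hsj)
  · exact lt_irrefl s (hE.2 j i h s hsj s hsi)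

lemma Consec.sum_restr_eq_of_support_subset (hN0 : N 0 = 0) {n : ℕ} {E : Fin n → Finset ℕ}
    (hE : Consec E) {b : ℕ →₀ ℝ} {j₀ : Fin n} (h : b.support ⊆ E j₀) :
    ∑ j, N (restr (E j) b) = N b := by
  rw [Fintype.sum_eq_single j₀ fun j hj => ?_]
  · rw [restr, (Finsupp.filter_eq_self_iff _ _).2 fun i hi => h (Finsupp.mem_support_iff.2 hi)]
  · rw [restr, (Finsupp.filter_eq_zero_iff _ _).2 fun i hi => ?_, hN0]
    by_contra hbi
    exact disjoint_left.1 (hE.disjoint hj) hi (h (Finsupp.mem_support_iff.2 hbi))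

lemma tiSet_nonempty (q γ : ℝ) (N : (ℕ →₀ ℝ) → ℝ) (a : ℕ →₀ ℝ) : (tiSet q γ N a).Nonempty :=
  ⟨_, 1, one_pos, fun _ => {0}, ⟨fun _ => singleton_nonempty 0, fun i j hij => by omega⟩, rfl⟩

lemma div_natCast_rpow_le {x : ℝ} (hx : 0 ≤ x) {m : ℕ} (hm : 0 < m) {r : ℝ} (hr : 0 ≤ r) :
    x / (m : ℝ) ^ r ≤ x :=
  div_le_self hx (Real.one_le_rpow (by exact_mod_cast hm) hr)

lemma bddAbove_range_abs (b : ℕ →₀ ℝ) : BddAbove (Set.range fun i => |b i|) := by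
  rw [Set.range_comp' abs b]
  exact (b.finite_range.image _).bddAbove

def l1Norm (b : ℕ →₀ ℝ) : ℝ := ∑ i ∈ b.support, |b i|

lemma l1Norm_nonneg (b : ℕ →₀ ℝ) : 0 ≤ l1Norm b :=
  sum_nonneg fun _ _ => abs_nonneg _

lemma abs_apply_le_l1Norm (b : ℕ →₀ ℝ) (i : ℕ) : |b i| ≤ l1Norm b := by
  by_cases h : i ∈ b.support
  · exact single_le_sum (f := fun i => |b i|) (fun _ _ => abs_nonneg _) h
  · simp [Finsupp.notMem_support_iff.1 h, l1Norm_nonneg]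

lemma l1Norm_restr (E : Finset ℕ) (b : ℕ →₀ ℝ) :
    l1Norm (restr E b) = ∑ i ∈ b.support with i ∈ E, |b i| := by
  rw [l1Norm, support_restr]
  exact sum_congr rfl fun i hi => by rw [restr_apply_of_mem (mem_filter.1 hi).2]

lemma Consec.sum_l1Norm_restr_le {n : ℕ} {E : Fin n → Finset ℕ} (hE : Consec E) (b : ℕ →₀ ℝ) :
    ∑ j, l1Norm (restr (E j) b) ≤ l1Norm b := by
  have hdisj : ((univ : Finset (Fin n)) : Set (Fin n)).PairwiseDisjoint
      fun j => {i ∈ b.support | i ∈ E j} :=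
    fun i _ j _ hij => disjoint_filter.2 fun _ _ h => disjoint_left.1 (hE.disjoint hij) h
  simp only [l1Norm_restr]
  rw [← sum_biUnion hdisj]
  exact sum_le_sum_of_subset_of_nonneg (biUnion_subset.2 fun _ _ => filter_subset _ _)
    fun _ _ _ => abs_nonneg _

namespace TiEq

lemma abs_apply_le (hN : TiEq q γ N) (b : ℕ →₀ ℝ) (i : ℕ) : |b i| ≤ N b := by
  rw [hN b]
  exact (le_ciSup (bddAbove_range_abs b) i).trans (le_max_left _ _)

lemma nonneg (hN : TiEq q γ N) (b : ℕ →₀ ℝ) : 0 ≤ N b :=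
  (abs_nonneg _).trans (hN.abs_apply_le b 0)

/-- If `N 0` were positive, the families of singletons would make `tiSet q γ N 0` unbounded
(`γ m N(0) / m^{1/q} → ∞`), so its supremum would be the junk value `0`, forcing `N 0 = 0`. -/
lemma map_zero (hN : TiEq q γ N) (hq : 1 < q) (hγ0 : 0 < γ) : N 0 = 0 := by
  by_contra h0
  have ht : 0 < N 0 := (hN.nonneg 0).lt_of_ne' h0
  have hmem : ∀ m : ℕ, 0 < m → γ * N 0 * (m : ℝ) ^ (1 - 1 / q) ∈ tiSet q γ N 0 := by
    intro m hm
    refine ⟨m, hm, fun j => {(j : ℕ)}, ⟨fun _ => singleton_nonempty _, ?_⟩, ?_⟩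
    · intro i j hij s hs t ht
      rw [mem_singleton] at hs ht
      subst hs ht
      exact hij
    · simp only [restr, Finsupp.filter_zero, sum_const, card_univ, Fintype.card_fin, nsmul_eq_mul,
        Real.rpow_sub (Nat.cast_pos.2 hm), Real.rpow_one]
      ring
  have hunb : ¬ BddAbove (tiSet q γ N 0) := by
    rintro ⟨M, hM⟩
    have htend : Tendsto (fun m : ℕ => γ * N 0 * (m : ℝ) ^ (1 - 1 / q)) atTop atTop :=
      ((tendsto_rpow_atTop (sub_pos.2 ((div_lt_one (by linarith)).2 hq))).comp
        tendsto_natCast_atTop_atTop).const_mul_atTop (mul_pos hγ0 ht)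
    obtain ⟨m, hMm, hm⟩ := ((htend.eventually_gt_atTop M).and (eventually_gt_atTop 0)).exists
    exact (hM (hmem m hm)).not_gt hMm
  apply h0
  rw [hN 0, Real.sSup_of_not_bddAbove hunb]
  simp

lemma le_of_abs_le_of_split_le (hN : TiEq q γ N) (hq : 1 < q) (hγ0 : 0 < γ) (hγ1 : γ < 1)
    {b : ℕ →₀ ℝ} {X : ℝ} (habs : ∀ i, |b i| ≤ X)
    (hsplit : ∀ m (E : Fin m → Finset ℕ), 0 < m → Consec E → (∀ j, ¬ b.support ⊆ E j) →
      γ * (∑ j, N (restr (E j) b)) / (m : ℝ) ^ (1 / q) ≤ X) :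
    N b ≤ X := by
  have hX : 0 ≤ X := (abs_nonneg _).trans (habs 0)
  have hS : sSup (tiSet q γ N b) ≤ max X (γ * N b) := by
    refine csSup_le (tiSet_nonempty q γ N b) ?_
    rintro _ ⟨m, hm, E, hE, rfl⟩
    by_cases hcov : ∃ j₀, b.support ⊆ E j₀
    · obtain ⟨j₀, hj₀⟩ := hcov
      rw [hE.sum_restr_eq_of_support_subset (hN.map_zero hq hγ0) hj₀]
      exact le_max_of_le_right
        (div_natCast_rpow_le (mul_nonneg hγ0.le (hN.nonneg b)) hm (by positivity))
    · exact le_max_of_le_left (hsplit m E hm hE (not_exists.1 hcov))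
  have hNb : N b ≤ max X (γ * N b) :=
    calc N b = max (⨆ i, |b i|) (sSup (tiSet q γ N b)) := hN b
      _ ≤ max X (max X (γ * N b)) := max_le_max (ciSup_le habs) hS
      _ = max X (γ * N b) := by simp
  rcases le_max_iff.1 hNb with h | h
  · exact h
  · nlinarith [hN.nonneg b]

lemma mem_tiSet_le_mul_l1Norm (hN : TiEq q γ N) (hq : 1 < q) (hγ0 : 0 < γ) {b : ℕ →₀ ℝ}
    {m : ℕ} (hm : 0 < m) {E : Fin m → Finset ℕ} (hE : Consec E)
    (hle : ∀ j, N (restr (E j) b) ≤ l1Norm (restr (E j) b)) :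
    γ * (∑ j, N (restr (E j) b)) / (m : ℝ) ^ (1 / q) ≤ γ * l1Norm b :=
  calc γ * (∑ j, N (restr (E j) b)) / (m : ℝ) ^ (1 / q)
      ≤ γ * ∑ j, N (restr (E j) b) :=
        div_natCast_rpow_le (mul_nonneg hγ0.le (sum_nonneg fun j _ => hN.nonneg _)) hm
          (by positivity)
    _ ≤ γ * ∑ j, l1Norm (restr (E j) b) := by gcongr with j; exact hle j
    _ ≤ γ * l1Norm b := by gcongr; exact hE.sum_l1Norm_restr_le b

lemma le_l1Norm (hN : TiEq q γ N) (hq : 1 < q) (hγ0 : 0 < γ) (hγ1 : γ < 1) (b : ℕ →₀ ℝ) :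
    N b ≤ l1Norm b := by
  induction hk : #b.support using Nat.strong_induction_on generalizing b with
  | _ k ih =>
  refine hN.le_of_abs_le_of_split_le hq hγ0 hγ1 (abs_apply_le_l1Norm b) fun m E hm hE hcov => ?_
  calc γ * (∑ j, N (restr (E j) b)) / (m : ℝ) ^ (1 / q) ≤ γ * l1Norm b :=
        hN.mem_tiSet_le_mul_l1Norm hq hγ0 hm hE fun j =>
          ih _ (hk ▸ card_support_restr_lt (hcov j)) _ rfl
    _ ≤ l1Norm b := mul_le_of_le_one_left (l1Norm_nonneg b) hγ1.le

lemma bddAbove_tiSet (hN : TiEq q γ N) (hq : 1 < q) (hγ0 : 0 < γ) (hγ1 : γ < 1)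
    (b : ℕ →₀ ℝ) : BddAbove (tiSet q γ N b) :=
  ⟨γ * l1Norm b, by
    rintro _ ⟨m, hm, E, hE, rfl⟩
    exact hN.mem_tiSet_le_mul_l1Norm hq hγ0 hm hE fun j => hN.le_l1Norm hq hγ0 hγ1 _⟩

lemma le_of_mem_tiSet (hN : TiEq q γ N) (hq : 1 < q) (hγ0 : 0 < γ) (hγ1 : γ < 1)
    {b : ℕ →₀ ℝ} {x : ℝ} (hx : x ∈ tiSet q γ N b) : x ≤ N b := by
  rw [hN b]
  exact (le_csSup (hN.bddAbove_tiSet hq hγ0 hγ1 b) hx).trans (le_max_right _ _)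

lemma smul_le (hN : TiEq q γ N) (hq : 1 < q) (hγ0 : 0 < γ) (hγ1 : γ < 1) {c : ℝ} (hc : 0 < c)
    (b : ℕ →₀ ℝ) : N (c • b) ≤ c * N b := by
  induction hk : #b.support using Nat.strong_induction_on generalizing b with
  | _ k ih =>
  refine hN.le_of_abs_le_of_split_le hq hγ0 hγ1 (fun i => ?_) fun m E hm hE hcov => ?_
  · rw [Finsupp.smul_apply, smul_eq_mul, abs_mul, abs_of_pos hc]
    exact mul_le_mul_of_nonneg_left (hN.abs_apply_le b i) hc.le
  · rw [Finsupp.support_smul_eq hc.ne'] at hcov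
    calc γ * (∑ j, N (restr (E j) (c • b))) / (m : ℝ) ^ (1 / q)
        ≤ γ * (∑ j, c * N (restr (E j) b)) / (m : ℝ) ^ (1 / q) := by
          gcongr with j
          rw [restr_smul]
          exact ih _ (hk ▸ card_support_restr_lt (hcov j)) _ rfl
      _ = c * (γ * (∑ j, N (restr (E j) b)) / (m : ℝ) ^ (1 / q)) := by rw [← mul_sum]; ring
      _ ≤ c * N b :=
        mul_le_mul_of_nonneg_left (hN.le_of_mem_tiSet hq hγ0 hγ1 ⟨m, hm, E, hE, rfl⟩) hc.le

lemma sum_restr_le (hN : TiEq q γ N) (hq : 1 < q) (hγ0 : 0 < γ) (hγ1 : γ < 1) {n : ℕ}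
    {E : Fin n → Finset ℕ} (hE : Consec E) (a : ℕ →₀ ℝ) :
    ∑ j, N (restr (E j) a) ≤ (n : ℝ) ^ (1 / q) / γ * N a := by
  rcases n.eq_zero_or_pos with rfl | hn
  · rw [univ_eq_empty, sum_empty]
    exact mul_nonneg (div_nonneg (Real.rpow_nonneg (Nat.cast_nonneg 0) _) hγ0.le) (hN.nonneg a)
  · have hx := hN.le_of_mem_tiSet hq hγ0 hγ1 (b := a) ⟨n, hn, E, hE, rfl⟩
    rw [div_le_iff₀ (by positivity)] at hx
    rw [div_mul_eq_mul_div, le_div_iff₀ hγ0]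
    linarith

/-- The hypothesis excludes the junk value: `dualN N g` is `0` when the pairings are unbounded. -/
lemma sum_mul_le_dualN_mul (hN : TiEq q γ N) (hq : 1 < q) (hγ0 : 0 < γ) (hγ1 : γ < 1)
    {g : ℕ →₀ ℝ} (hg : dualN N g ≠ 0) (b : ℕ →₀ ℝ) :
    ∑ i ∈ g.support, g i * b i ≤ dualN N g * N b := by
  have hbdd : BddAbove {x | ∃ a : ℕ →₀ ℝ, N a ≤ 1 ∧ x = ∑ i ∈ g.support, g i * a i} := by
    by_contra h
    exact hg (Real.sSup_of_not_bddAbove h)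
  rcases (hN.nonneg b).eq_or_lt with hb | hb
  · have hb0 : b = 0 := by
      ext i
      simpa using (hN.abs_apply_le b i).trans hb.ge
    subst hb0
    simp [← hb]
  · have hunit : N ((N b)⁻¹ • b) ≤ 1 :=
      (hN.smul_le hq hγ0 hγ1 (inv_pos.2 hb) b).trans (inv_mul_cancel₀ hb.ne').le
    calc ∑ i ∈ g.support, g i * b i = N b * ∑ i ∈ g.support, g i * ((N b)⁻¹ • b) i := by
          simp only [Finsupp.smul_apply, smul_eq_mul, mul_sum]
          exact sum_congr rfl fun i _ => by field_simp
      _ ≤ N b * dualN N g := mul_le_mul_of_nonneg_left (le_csSup hbdd ⟨_, hunit, rfl⟩) hb.le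
      _ = dualN N g * N b := mul_comm _ _

end TiEq

lemma dualN_zero_nonpos (N : (ℕ →₀ ℝ) → ℝ) : dualN N 0 ≤ 0 :=
  Real.sSup_nonpos (by rintro _ ⟨a, -, rfl⟩; simp)

lemma sum_support_sum_mul {ι : Type*} (s : Finset ι) (f : ι → ℕ →₀ ℝ) (a : ℕ →₀ ℝ) :
    ∑ i ∈ (∑ j ∈ s, f j).support, (∑ j ∈ s, f j) i * a i =
      ∑ j ∈ s, ∑ i ∈ (f j).support, f j i * a i :=
  (Finsupp.sum_finsetSum_index (h := fun i x => x * a i) (fun _ => zero_mul _)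
    fun _ _ _ => add_mul _ _ _).symm

/-- in `Ti^*(p,γ)`, any `n` normalized block functionals of `(eⱼ^*)`
(given by their coefficient vectors, with consecutive supports) satisfy
`‖∑ⱼ xⱼ^*‖ ≤ n^{1/q}/γ`. -/
theorem stmt8 (p q γ : ℝ) (hp : 1 < p) (hpq : 1 / p + 1 / q = 1)
    (hγ0 : 0 < γ) (hγ3 : γ < (3 : ℝ) ^ (-(1 / q)))
    (N : (ℕ →₀ ℝ) → ℝ) (hN : TiEq q γ N)
    (n : ℕ) (f : Fin n → (ℕ →₀ ℝ))
    (hfn : ∀ j, dualN N (f j) = 1) (hfc : ConsecSupp f) :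
    dualN N (∑ j, f j) ≤ (n : ℝ) ^ (1 / q) / γ := by
  have hq : 1 < q := (Real.holderConjugate_iff.2 ⟨hp, by simpa using hpq⟩).symm.lt
  have hγ1 : γ < 1 := hγ3.trans <|
    Real.rpow_lt_one_of_one_lt_of_neg (by norm_num) (neg_lt_zero.2 (one_div_pos.2 (by linarith)))
  have hE : Consec fun j => (f j).support :=
    ⟨fun j => Finsupp.support_nonempty_iff.2 fun h0 => by
      linarith [hfn j ▸ h0 ▸ dualN_zero_nonpos N], hfc⟩
  refine Real.sSup_le ?_ (by positivity)
  rintro _ ⟨a, ha, rfl⟩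
  calc ∑ i ∈ (∑ j, f j).support, (∑ j, f j) i * a i
      = ∑ j, ∑ i ∈ (f j).support, f j i * restr (f j).support a i := by
        rw [sum_support_sum_mul]
        exact sum_congr rfl fun j _ => sum_congr rfl fun i hi => by rw [restr_apply_of_mem hi]
    _ ≤ ∑ j, N (restr (f j).support a) := sum_le_sum fun j _ => by
        simpa [hfn j] using hN.sum_mul_le_dualN_mul hq hγ0 hγ1 (g := f j) (by simp [hfn j]) _
    _ ≤ (n : ℝ) ^ (1 / q) / γ * N a := hN.sum_restr_le hq hγ0 hγ1 hE a
    _ ≤ (n : ℝ) ^ (1 / q) / γ := mul_le_of_le_one_right (by positivity) ha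
end
end

section
/- In Ti*(p,γ) with 0 < γ < 3^{−1/q}, the norm of ∑ⱼ₌₁ⁿ eⱼ* satisfies 3^{−1/q} n^{1/q} ≤ ‖∑ⱼ₌₁ⁿ eⱼ*‖ ≤ n^{1/q}/γ. -/
open Finset

noncomputable section

section Aux

variable {p q γ : ℝ} {N : (ℕ →₀ ℝ) → ℝ}

lemma N_nonneg (hN : TiEq q γ N) (a : ℕ →₀ ℝ) : 0 ≤ N a := by
  rw [hN a]
  exact le_trans (Real.iSup_nonneg fun i => abs_nonneg _) (le_max_left _ _)

lemma abs_le_N (hN : TiEq q γ N) (a : ℕ →₀ ℝ) (i : ℕ) : |a i| ≤ N a := by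
  rw [hN a]
  refine le_trans ?_ (le_max_left _ _)
  refine le_ciSup (f := fun i => |a i|) ⟨∑ j ∈ a.support, |a j|, ?_⟩ i
  rintro x ⟨j, rfl⟩
  by_cases hj : j ∈ a.support
  · exact Finset.single_le_sum (f := fun k => |a k|) (fun k _ => abs_nonneg _) hj
  · simp only [Finsupp.notMem_support_iff.mp hj, abs_zero]
    exact Finset.sum_nonneg fun k _ => abs_nonneg _

lemma sSup_tiSet_le (hN : TiEq q γ N) (a : ℕ →₀ ℝ) : sSup (tiSet q γ N a) ≤ N a := by
  rw [hN a]; exact le_max_right _ _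

lemma restr_zero (E : Finset ℕ) : restr E 0 = 0 := by
  ext i; simp [restr, Finsupp.filter_apply]

/-- consecutive singletons -/
lemma consec_singletons (k : ℕ) : Consec (fun j : Fin k => ({(j : ℕ)} : Finset ℕ)) := by
  constructor
  · intro j; exact ⟨j, Finset.mem_singleton_self _⟩
  · intro i j hij s hs t ht
    simp only [Finset.mem_singleton] at hs ht
    subst hs; subst ht
    exact_mod_cast hij

lemma N_zero (hp : 1 < p) (hpq : 1 / p + 1 / q = 1) (hγ0 : 0 < γ)
    (hN : TiEq q γ N) : N 0 = 0 := by
  have hp0 : (0:ℝ) < p := lt_trans one_pos hp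
  have h1p : 0 < 1 / p := by positivity
  by_contra h
  have h0 : 0 < N 0 := lt_of_le_of_ne (N_nonneg hN 0) (Ne.symm h)
  have hmem : ∀ k : ℕ, 0 < k →
      γ * ((k : ℝ) * N 0) / (k : ℝ) ^ (1 / q) ∈ tiSet q γ N 0 := by
    intro k hk
    refine ⟨k, hk, fun j : Fin k => {(j : ℕ)}, consec_singletons k, ?_⟩
    congr 2
    rw [Finset.sum_congr rfl (fun j _ => by rw [restr_zero])]
    simp [mul_comm]
  have hub : ¬ BddAbove (tiSet q γ N 0) := by
    rintro ⟨B, hB⟩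
    have key : ∀ k : ℕ, 0 < k → γ * N 0 * (k : ℝ) ^ (1 / p) ≤ B := by
      intro k hk
      have h1 := hB (hmem k hk)
      have hk0 : (0:ℝ) < (k : ℝ) := by exact_mod_cast hk
      have hkq : (0:ℝ) < (k : ℝ) ^ (1 / q) := Real.rpow_pos_of_pos hk0 _
      have hsplit : (k : ℝ) ^ (1 / p) * (k : ℝ) ^ (1 / q) = (k : ℝ) := by
        rw [← Real.rpow_add hk0, hpq, Real.rpow_one]
      have heq : γ * ((k : ℝ) * N 0) / (k : ℝ) ^ (1 / q) = γ * N 0 * (k : ℝ) ^ (1 / p) := by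
        rw [div_eq_iff hkq.ne', mul_assoc, hsplit]; ring
      rw [heq] at h1
      exact h1
    have hB0 : 0 < B := by
      have := key 1 one_pos
      simp only [Nat.cast_one, Real.one_rpow, mul_one] at this
      exact lt_of_lt_of_le (by positivity) this
    set C := B / (γ * N 0) with hC
    have hC0 : 0 < C := by positivity
    have hkey2 : ∀ k : ℕ, 0 < k → (k : ℝ) ≤ C ^ p := by
      intro k hk
      have h1 : (k : ℝ) ^ (1 / p) ≤ C := by
        rw [hC, le_div_iff₀ (by positivity)]
        calc (k:ℝ) ^ (1/p) * (γ * N 0) = γ * N 0 * (k:ℝ) ^ (1/p) := by ring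
          _ ≤ B := key k hk
      have hk0 : (0:ℝ) ≤ (k : ℝ) := by positivity
      calc (k : ℝ) = ((k : ℝ) ^ (1 / p)) ^ p := by
            rw [← Real.rpow_mul hk0, one_div_mul_cancel hp0.ne', Real.rpow_one]
        _ ≤ C ^ p := Real.rpow_le_rpow (Real.rpow_nonneg hk0 _) h1 hp0.le
    have := hkey2 (⌈C ^ p⌉₊ + 1) (Nat.succ_pos _)
    have h2 : C ^ p ≤ (⌈C ^ p⌉₊ : ℝ) := Nat.le_ceil _
    push_cast at this
    linarith
  have h3 := hN 0
  rw [Real.sSup_of_not_bddAbove hub] at h3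
  simp only [Finsupp.coe_zero, Pi.zero_apply, abs_zero, ciSup_const, max_self] at h3
  exact h h3

def ind (t : ℝ) (A : Finset ℕ) : ℕ →₀ ℝ := Finsupp.indicator A fun _ _ => t

lemma ind_apply (t : ℝ) (A : Finset ℕ) (i : ℕ) : ind t A i = if i ∈ A then t else 0 := by
  simp [ind, Finsupp.indicator_apply]

lemma ind_empty (t : ℝ) : ind t ∅ = 0 := by
  ext i; simp [ind_apply]

lemma restr_ind (t : ℝ) (A E : Finset ℕ) : restr E (ind t A) = ind t (A ∩ E) := by
  ext i
  simp only [restr, Finsupp.filter_apply, ind_apply, Finset.mem_inter]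
  by_cases h1 : i ∈ A <;> by_cases h2 : i ∈ E <;> simp [h1, h2]

lemma holder_nat (hp : 1 < p) (hpq : 1 / p + 1 / q = 1) {k : ℕ} (c : Fin k → ℕ) :
    ∑ j, ((c j : ℝ)) ^ (1 / p) ≤ (k : ℝ) ^ (1 / q) * (∑ j, (c j : ℝ)) ^ (1 / p) := by
  have hp0 : (0:ℝ) < p := lt_trans one_pos hp
  have hconj : Real.HolderConjugate p q := Real.holderConjugate_iff.mpr ⟨hp, by rw [← one_div, ← one_div]; exact hpq⟩
  have h := Real.inner_le_Lp_mul_Lq_of_nonneg (univ : Finset (Fin k)) hconj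
      (f := fun j => ((c j : ℝ)) ^ (1 / p)) (g := fun _ => 1)
      (fun i _ => Real.rpow_nonneg (by positivity) _) (fun i _ => zero_le_one)
  simp only [mul_one, Real.one_rpow, Finset.sum_const, Finset.card_univ, Fintype.card_fin,
    nsmul_eq_mul] at h
  have hpow : ∀ j : Fin k, (((c j : ℝ)) ^ (1 / p)) ^ p = (c j : ℝ) := by
    intro j
    rw [← Real.rpow_mul (by positivity), one_div_mul_cancel hp0.ne', Real.rpow_one]
  rw [Finset.sum_congr rfl (fun j _ => hpow j)] at h
  calc ∑ j, ((c j : ℝ)) ^ (1 / p) ≤ (∑ j, (c j : ℝ)) ^ (1 / p) * (k:ℝ) ^ (1 / q) := h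
    _ = (k : ℝ) ^ (1 / q) * (∑ j, (c j : ℝ)) ^ (1 / p) := mul_comm _ _

/-- disjointness of consecutive blocks -/
lemma consec_disjoint {k : ℕ} {E : Fin k → Finset ℕ} (hE : Consec E) {i j : Fin k}
    (hij : i ≠ j) {x : ℕ} (hxi : x ∈ E i) (hxj : x ∈ E j) : False := by
  rcases lt_or_gt_of_ne hij with h | h
  · exact lt_irrefl x (hE.2 i j h x hxi x hxj)
  · exact lt_irrefl x (hE.2 j i h x hxj x hxi)

/-- Main upper estimate: `N(t·𝟙_A) ≤ t·|A|^{1/p}`. -/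
lemma N_ind_le (hp : 1 < p) (hpq : 1 / p + 1 / q = 1) (hγ0 : 0 < γ) (hγ1 : γ < 1)
    (hN : TiEq q γ N) {t : ℝ} (ht : 0 ≤ t) :
    ∀ m : ℕ, ∀ A : Finset ℕ, A.card ≤ m → N (ind t A) ≤ t * (A.card : ℝ) ^ (1 / p) := by
  have hp0 : (0:ℝ) < p := lt_trans one_pos hp
  have h1p0 : 0 < 1 / p := by positivity
  have h1p1 : 1 / p < 1 := by rw [div_lt_one hp0]; exact hp
  have h1q0 : 0 < 1 / q := by linarith
  intro m
  induction m with
  | zero =>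
    intro A hA
    have hAe : A = ∅ := Finset.card_eq_zero.mp (Nat.le_zero.mp hA)
    rw [hAe, ind_empty, N_zero hp hpq hγ0 hN]
    positivity
  | succ m IH =>
    intro A hA
    by_cases hAe : A = ∅
    · rw [hAe, ind_empty, N_zero hp hpq hγ0 hN]; positivity
    have hA1 : 1 ≤ A.card := Finset.card_pos.mpr (Finset.nonempty_of_ne_empty hAe)
    have hA1' : (1:ℝ) ≤ (A.card : ℝ) := by exact_mod_cast hA1
    have hcard1 : (1:ℝ) ≤ (A.card : ℝ) ^ (1 / p) :=
      Real.one_le_rpow hA1' h1p0.le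
    have hrhs0 : 0 ≤ t * (A.card : ℝ) ^ (1 / p) := by positivity
    set a := ind t A with ha
    -- bound the sup part
    have hsup : (⨆ i, |a i|) ≤ t := by
      refine Real.iSup_le (fun i => ?_) ht
      rw [ha, ind_apply]
      split_ifs
      · rw [abs_of_nonneg ht]
      · simpa using ht
    -- bound the sSup part
    have hss : sSup (tiSet q γ N a) ≤ max (γ * N a) (t * (A.card : ℝ) ^ (1 / p)) := by
      refine Real.sSup_le ?_ (le_trans hrhs0 (le_max_right _ _))
      rintro x ⟨k, hk, E, hE, rfl⟩
      have hk0 : (0:ℝ) < (k:ℝ) := by exact_mod_cast hk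
      have hkq1 : 1 ≤ (k:ℝ) ^ (1 / q) :=
        Real.one_le_rpow (by exact_mod_cast hk) h1q0.le
      have hkq0 : (0:ℝ) < (k:ℝ) ^ (1 / q) := lt_of_lt_of_le one_pos hkq1
      have hres : ∀ j, restr (E j) a = ind t (A ∩ E j) := fun j => restr_ind t A (E j)
      by_cases hfull : ∃ j₀, A ⊆ E j₀
      · obtain ⟨j₀, hj₀⟩ := hfull
        have h1 : A ∩ E j₀ = A := Finset.inter_eq_left.mpr hj₀
        have hz : ∀ j, j ≠ j₀ → N (restr (E j) a) = 0 := by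
          intro j hj
          have hemp : A ∩ E j = ∅ := by
            by_contra hne
            obtain ⟨s, hs⟩ := Finset.nonempty_of_ne_empty hne
            rw [Finset.mem_inter] at hs
            exact consec_disjoint hE hj hs.2 (hj₀ hs.1)
          rw [hres j, hemp, ind_empty, N_zero hp hpq hγ0 hN]
        have hsum : ∑ j, N (restr (E j) a) = N a := by
          rw [Finset.sum_eq_single j₀ (fun j _ hj => hz j hj) (by simp)]
          rw [hres j₀, h1, ha]
        rw [hsum]
        refine le_trans ?_ (le_max_left _ _)
        exact div_le_self (mul_nonneg hγ0.le (N_nonneg hN a)) hkq1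
      · push_neg at hfull
        have hcard : ∀ j, (A ∩ E j).card ≤ m := by
          intro j
          have hss : A ∩ E j ⊂ A := by
            refine Finset.ssubset_iff_subset_ne.mpr ⟨Finset.inter_subset_left, ?_⟩
            intro hEq
            exact hfull j (Finset.inter_eq_left.mp hEq)
          have := Finset.card_lt_card hss
          omega
        have hIH : ∀ j, N (restr (E j) a) ≤ t * ((A ∩ E j).card : ℝ) ^ (1 / p) := by
          intro j
          rw [hres j]
          exact IH _ (hcard j)
        have hsum1 : ∑ j, N (restr (E j) a) ≤ t * ∑ j, ((A ∩ E j).card : ℝ) ^ (1 / p) := by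
          rw [Finset.mul_sum]
          exact Finset.sum_le_sum fun j _ => hIH j
        have hcards : ∑ j, ((A ∩ E j).card) ≤ A.card := by
          classical
          calc ∑ j : Fin k, (A ∩ E j).card
              = (Finset.univ.biUnion fun j => A ∩ E j).card := by
                refine (Finset.card_biUnion ?_).symm
                intro i _ j _ hij
                rw [Function.onFun, Finset.disjoint_left]
                intro x hxi hxj
                rw [Finset.mem_inter] at hxi hxj
                exact consec_disjoint hE hij hxi.2 hxj.2
            _ ≤ A.card := by
                refine Finset.card_le_card ?_
                intro x hx
                rw [Finset.mem_biUnion] at hx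
                obtain ⟨j, _, hj⟩ := hx
                exact (Finset.mem_inter.mp hj).1
        have hcards' : (∑ j, (((A ∩ E j).card : ℕ) : ℝ)) ≤ (A.card : ℝ) := by
          push_cast
          exact_mod_cast hcards
        have hH := holder_nat hp hpq (fun j : Fin k => (A ∩ E j).card)
        have h3 : ∑ j, ((A ∩ E j).card : ℝ) ^ (1 / p)
            ≤ (k:ℝ) ^ (1 / q) * (A.card : ℝ) ^ (1 / p) := by
          refine le_trans hH ?_
          have := Real.rpow_le_rpow (Finset.sum_nonneg fun j _ => by positivity) hcards' h1p0.le
          exact mul_le_mul_of_nonneg_left this hkq0.le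
        refine le_trans ?_ (le_max_right _ _)
        calc γ * (∑ j, N (restr (E j) a)) / (k:ℝ) ^ (1 / q)
            ≤ γ * (t * ((k:ℝ) ^ (1 / q) * (A.card : ℝ) ^ (1 / p))) / (k:ℝ) ^ (1 / q) := by
              have hS : ∑ j, N (restr (E j) a)
                  ≤ t * ((k:ℝ) ^ (1 / q) * (A.card : ℝ) ^ (1 / p)) :=
                le_trans hsum1 (mul_le_mul_of_nonneg_left h3 ht)
              exact (div_le_div_iff_of_pos_right hkq0).mpr (mul_le_mul_of_nonneg_left hS hγ0.le)
          _ = γ * (t * (A.card : ℝ) ^ (1 / p)) := by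
              field_simp
          _ ≤ 1 * (t * (A.card : ℝ) ^ (1 / p)) := by
              apply mul_le_mul_of_nonneg_right hγ1.le hrhs0
          _ = t * (A.card : ℝ) ^ (1 / p) := one_mul _
    -- combine
    have hNa := hN a
    have hmax : N a ≤ max (γ * N a) (t * (A.card : ℝ) ^ (1 / p)) := by
      calc N a = max (⨆ i, |a i|) (sSup (tiSet q γ N a)) := hNa
        _ ≤ max (γ * N a) (t * (A.card : ℝ) ^ (1 / p)) :=
          max_le (le_trans hsup
            (le_trans (le_mul_of_one_le_right ht hcard1) (le_max_right _ _))) hss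
    rcases le_max_iff.mp hmax with h | h
    · nlinarith [N_nonneg hN a]
    · exact h



lemma tiSet_bddAbove (hp : 1 < p) (hpq : 1 / p + 1 / q = 1) (hγ0 : 0 < γ)
    (hN : TiEq q γ N) (a : ℕ →₀ ℝ) : BddAbove (tiSet q γ N a) := by
  classical
  have h1p0 : 0 < 1 / p := by positivity
  have h1q0 : 0 < 1 / q := by
    have : 1 / p < 1 := by rw [div_lt_one (lt_trans one_pos hp)]; exact hp
    linarith
  set M := ∑ S ∈ a.support.powerset, N (restr S a) with hM
  have hMle : ∀ E : Finset ℕ, N (restr E a) ≤ M := by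
    intro E
    have hre : restr E a = restr (a.support ∩ E) a := by
      ext i
      simp only [restr, Finsupp.filter_apply, Finset.mem_inter]
      by_cases h2 : i ∈ a.support
      · simp [h2]
      · simp [Finsupp.notMem_support_iff.mp h2]
    rw [hre]
    exact Finset.single_le_sum (f := fun S => N (restr S a)) (fun S _ => N_nonneg hN _)
      (Finset.mem_powerset.mpr Finset.inter_subset_left)
  refine ⟨γ * ((a.support.card : ℝ) * M), ?_⟩
  rintro x ⟨k, hk, E, hE, rfl⟩
  have hk0 : (0:ℝ) < (k:ℝ) := by exact_mod_cast hk
  have hkq1 : 1 ≤ (k:ℝ) ^ (1 / q) := Real.one_le_rpow (by exact_mod_cast hk) h1q0.le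
  have hzero : ∀ j : Fin k, ¬ (E j ∩ a.support).Nonempty → N (restr (E j) a) = 0 := by
    intro j hj
    have hres : restr (E j) a = 0 := by
      ext i
      simp only [restr, Finsupp.filter_apply, Finsupp.coe_zero, Pi.zero_apply]
      split_ifs with h
      · by_contra hai
        exact hj ⟨i, Finset.mem_inter.mpr ⟨h, Finsupp.mem_support_iff.mpr hai⟩⟩
      · rfl
    rw [hres, N_zero hp hpq hγ0 hN]
  set S := Finset.univ.filter (fun j : Fin k => (E j ∩ a.support).Nonempty) with hS
  have hsum : ∑ j, N (restr (E j) a) = ∑ j ∈ S, N (restr (E j) a) := by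
    refine (Finset.sum_subset (Finset.subset_univ S) ?_).symm
    intro j _ hj
    rw [hS, Finset.mem_filter] at hj
    push_neg at hj
    exact hzero j (Finset.not_nonempty_iff_eq_empty.mpr (hj (Finset.mem_univ j)))
  have hcardS : S.card ≤ a.support.card := by
    have hne : ∀ j ∈ S, (E j ∩ a.support).Nonempty := by
      intro j hj; rw [hS, Finset.mem_filter] at hj; exact hj.2
    refine Finset.card_le_card_of_injOn
      (fun j => if h : (E j ∩ a.support).Nonempty then (E j ∩ a.support).min' h else 0) ?_ ?_
    · intro j hj
      simp only [dif_pos (hne j hj)]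
      exact (Finset.mem_inter.mp ((E j ∩ a.support).min'_mem (hne j hj))).2
    · intro i hi j hj hij
      rw [Finset.mem_coe] at hi hj
      by_contra hne'
      simp only [dif_pos (hne i hi), dif_pos (hne j hj)] at hij
      have h1 := (Finset.mem_inter.mp ((E i ∩ a.support).min'_mem (hne i hi))).1
      have h2 := (Finset.mem_inter.mp ((E j ∩ a.support).min'_mem (hne j hj))).1
      rw [hij] at h1
      exact consec_disjoint hE hne' h1 h2
  have hM0 : 0 ≤ M := Finset.sum_nonneg fun S _ => N_nonneg hN _
  have hsle : ∑ j, N (restr (E j) a) ≤ (a.support.card : ℝ) * M := by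
    rw [hsum]
    calc ∑ j ∈ S, N (restr (E j) a) ≤ ∑ _j ∈ S, M := Finset.sum_le_sum fun j _ => hMle _
      _ = (S.card : ℝ) * M := by rw [Finset.sum_const, nsmul_eq_mul]
      _ ≤ (a.support.card : ℝ) * M := by
          apply mul_le_mul_of_nonneg_right _ hM0
          exact_mod_cast hcardS
  calc γ * (∑ j, N (restr (E j) a)) / (k:ℝ) ^ (1 / q)
      ≤ γ * (∑ j, N (restr (E j) a)) := by
        apply div_le_self _ hkq1
        exact mul_nonneg hγ0.le (Finset.sum_nonneg fun j _ => N_nonneg hN _)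
    _ ≤ γ * ((a.support.card : ℝ) * M) := mul_le_mul_of_nonneg_left hsle hγ0.le

lemma sum_le_of_N_le_one (hp : 1 < p) (hpq : 1 / p + 1 / q = 1) (hγ0 : 0 < γ)
    (hN : TiEq q γ N) {n : ℕ} (hn : 0 < n) {a : ℕ →₀ ℝ} (ha : N a ≤ 1) :
    ∑ i ∈ range n, a i ≤ (n : ℝ) ^ (1 / q) / γ := by
  have h1q0 : 0 < 1 / q := by
    have : 1 / p < 1 := by rw [div_lt_one (lt_trans one_pos hp)]; exact hp
    linarith
  have hn0 : (0:ℝ) < (n:ℝ) := by exact_mod_cast hn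
  have hnq : (0:ℝ) < (n:ℝ) ^ (1 / q) := Real.rpow_pos_of_pos hn0 _
  have hmem : γ * (∑ j : Fin n, N (restr {(j:ℕ)} a)) / (n:ℝ) ^ (1 / q) ∈ tiSet q γ N a :=
    ⟨n, hn, fun j : Fin n => {(j:ℕ)}, consec_singletons n, rfl⟩
  have hx : γ * (∑ j : Fin n, N (restr {(j:ℕ)} a)) / (n:ℝ) ^ (1 / q) ≤ 1 :=
    le_trans (le_trans (le_csSup (tiSet_bddAbove hp hpq hγ0 hN a) hmem)
      (sSup_tiSet_le hN a)) ha
  have hT : ∑ j : Fin n, N (restr {(j:ℕ)} a) ≤ (n:ℝ) ^ (1 / q) / γ := by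
    rw [div_le_iff₀ hnq, mul_comm] at hx
    rw [le_div_iff₀ hγ0]
    calc (∑ j : Fin n, N (restr {(j:ℕ)} a)) * γ
        = γ * (∑ j : Fin n, N (restr {(j:ℕ)} a)) := mul_comm _ _
      _ ≤ (n:ℝ) ^ (1 / q) := by linarith [hx]
  refine le_trans ?_ hT
  rw [← Fin.sum_univ_eq_sum_range (fun i => a i) n]
  refine Finset.sum_le_sum fun j _ => ?_
  have h1 : (restr {(j:ℕ)} a) (j:ℕ) = a (j:ℕ) := by
    simp [restr, Finsupp.filter_apply]
  calc a (j:ℕ) ≤ |a (j:ℕ)| := le_abs_self _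
    _ = |(restr {(j:ℕ)} a) (j:ℕ)| := by rw [h1]
    _ ≤ N (restr {(j:ℕ)} a) := abs_le_N hN _ _

end Aux

/-- in `Ti^*(p,γ)` with `0 < γ < 3^{-1/q}`,
`3^{-1/q} n^{1/q} ≤ ‖∑ⱼ₌₁ⁿ eⱼ^*‖ ≤ n^{1/q}/γ`. -/
theorem stmt9 (p q γ : ℝ) (hp : 1 < p) (hpq : 1 / p + 1 / q = 1)
    (hγ0 : 0 < γ) (hγ3 : γ < (3 : ℝ) ^ (-(1 / q)))
    (N : (ℕ →₀ ℝ) → ℝ) (hN : TiEq q γ N) (n : ℕ) (hn : 0 < n) :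
    (3 : ℝ) ^ (-(1 / q)) * (n : ℝ) ^ (1 / q) ≤
      dualN N (∑ j : Fin n, Finsupp.single (j : ℕ) (1 : ℝ)) ∧
    dualN N (∑ j : Fin n, Finsupp.single (j : ℕ) (1 : ℝ)) ≤ (n : ℝ) ^ (1 / q) / γ := by
  have hp0 : (0:ℝ) < p := lt_trans one_pos hp
  have h1p0 : 0 < 1 / p := by positivity
  have h1p1 : 1 / p < 1 := by rw [div_lt_one hp0]; exact hp
  have h1q0 : 0 < 1 / q := by linarith
  have hn0 : (0:ℝ) < (n:ℝ) := by exact_mod_cast hn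
  have hγ1 : γ < 1 :=
    lt_of_lt_of_le hγ3 (Real.rpow_le_one_of_one_le_of_nonpos (by norm_num) (by linarith))
  set c : ℕ →₀ ℝ := ∑ j : Fin n, Finsupp.single (j : ℕ) (1 : ℝ) with hc
  have hcapp : ∀ i, c i = if i ∈ range n then 1 else 0 := by
    intro i
    rw [hc, Finsupp.finset_sum_apply]
    rw [Fin.sum_univ_eq_sum_range (fun m => (Finsupp.single m (1:ℝ)) i) n]
    simp only [Finsupp.single_apply]
    exact Finset.sum_ite_eq' (range n) i (fun _ => 1)
  have hsupp : c.support = range n := by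
    ext i
    rw [Finsupp.mem_support_iff, hcapp i]
    split_ifs with h <;> simp [h]
  have hub : ∀ x ∈ {x | ∃ a : ℕ →₀ ℝ, N a ≤ 1 ∧ x = ∑ i ∈ c.support, c i * a i},
      x ≤ (n:ℝ) ^ (1 / q) / γ := by
    rintro x ⟨a, ha, rfl⟩
    have heq : ∑ i ∈ c.support, c i * a i = ∑ i ∈ range n, a i := by
      rw [hsupp]
      refine Finset.sum_congr rfl fun i hi => ?_
      rw [hcapp i, if_pos hi, one_mul]
    rw [heq]
    exact sum_le_of_N_le_one hp hpq hγ0 hN hn ha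
  constructor
  · -- lower bound
    set t : ℝ := (3:ℝ) ^ (-(1/q)) * (n:ℝ) ^ (-(1/p)) with htdef
    have ht0 : 0 ≤ t := by rw [htdef]; positivity
    have hNa : N (ind t (range n)) ≤ t * (((range n).card : ℕ) : ℝ) ^ (1/p) :=
      N_ind_le hp hpq hγ0 hγ1 hN ht0 n (range n) (by rw [Finset.card_range])
    have heq1 : t * (((range n).card : ℕ) : ℝ) ^ (1/p) = (3:ℝ) ^ (-(1/q)) := by
      rw [Finset.card_range, htdef, mul_assoc, ← Real.rpow_add hn0, neg_add_cancel,
        Real.rpow_zero, mul_one]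
    have hNa1 : N (ind t (range n)) ≤ 1 := by
      rw [heq1] at hNa
      exact le_trans hNa (Real.rpow_le_one_of_one_le_of_nonpos (by norm_num) (by linarith))
    have hpow : (n:ℝ) * (n:ℝ) ^ (-(1/p)) = (n:ℝ) ^ (1/q) := by
      nth_rewrite 1 [← Real.rpow_one (n:ℝ)]
      rw [← Real.rpow_add hn0]
      congr 1
      linarith
    have hmem : (3:ℝ) ^ (-(1/q)) * (n:ℝ) ^ (1/q)
        ∈ {x | ∃ a : ℕ →₀ ℝ, N a ≤ 1 ∧ x = ∑ i ∈ c.support, c i * a i} := by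
      refine ⟨ind t (range n), hNa1, ?_⟩
      rw [hsupp]
      have hterm : ∀ i ∈ range n, c i * (ind t (range n)) i = t := by
        intro i hi
        rw [hcapp i, if_pos hi, one_mul, ind_apply, if_pos hi]
      rw [Finset.sum_congr rfl hterm, Finset.sum_const, Finset.card_range, nsmul_eq_mul,
        htdef]
      calc (3:ℝ) ^ (-(1/q)) * (n:ℝ) ^ (1/q)
          = (3:ℝ) ^ (-(1/q)) * ((n:ℝ) * (n:ℝ) ^ (-(1/p))) := by rw [hpow]
        _ = (n:ℝ) * ((3:ℝ) ^ (-(1/q)) * (n:ℝ) ^ (-(1/p))) := by ring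
    exact le_csSup ⟨(n:ℝ) ^ (1/q) / γ, hub⟩ hmem
  · -- upper bound
    refine Real.sSup_le hub ?_
    exact div_nonneg (Real.rpow_nonneg hn0.le _) hγ0.le
end
end
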